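/- arXiv:1312.2795 — 2 statements merged into one kernel-verified Lean document; each statement's English description precedes it below -/
import Mathlib

section
/- Let z ∈ ℂ^{N×M}, let C be a nonempty set of entrywise-nonnegative real N×M matrices, and define E := {y ∈ ℂ^{N×M} : |y| ∈ C}, where |y| is the entrywise absolute value. If m* ∈ C minimizes ‖m − |z|‖_F over m ∈ C, then the matrix y* with entries y*_{ij} = m*_{ij}·(e^{i∠z})_{ij} (where (e^{i∠z})_{ij} = z_{ij}/|z_{ij}| if z_{ij} ≠ 0 and 1 otherwise) belongs to E and minimizes ‖y − z‖_F over y ∈ E; moreover inf_{y ∈ E} ‖y − z‖_F = inf_{m ∈ C} ‖m − |z|‖_F. -/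
/-! Entrywise, `‖y - z‖ ≥ |‖y‖ - ‖z‖|`, with equality when `y` has the phase of `z`. So the
distance from `z` to any `y ∈ E` is at least the distance from `|z|` to `|y| ∈ C`, and giving
the minimizer `m⋆` the phase of `z` attains this bound. -/

namespace Complex

/-- `e^{i∠w}`, taken to be `1` at `w = 0`. -/
noncomputable def phase (w : ℂ) : ℂ :=
  if w = 0 then 1 else w / (‖w‖ : ℂ)

@[simp]
theorem norm_phase (w : ℂ) : ‖phase w‖ = 1 := by
  by_cases hw : w = 0 <;> simp [phase, hw]

theorem norm_ofReal_mul_phase {r : ℝ} (hr : 0 ≤ r) (w : ℂ) : ‖(r : ℂ) * phase w‖ = r := by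
  simp [hr]

theorem ofReal_norm_mul_phase (w : ℂ) : (‖w‖ : ℂ) * phase w = w := by
  by_cases hw : w = 0
  · simp [hw]
  · have : (‖w‖ : ℂ) ≠ 0 := by simpa using hw
    simp only [phase, if_neg hw]
    field_simp

theorem norm_ofReal_mul_phase_sub (r : ℝ) (w : ℂ) :
    ‖(r : ℂ) * phase w - w‖ = |r - ‖w‖| := by
  have : (r : ℂ) * phase w - w = ((r - ‖w‖ : ℝ) : ℂ) * phase w := by
    rw [ofReal_sub, sub_mul, ofReal_norm_mul_phase]
  rw [this, norm_mul, norm_phase, mul_one, norm_real, Real.norm_eq_abs]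

end Complex

section Frobenius

variable {m n : Type*} [Fintype m] [Fintype n]

open Complex

theorem sum_sq_norm_ofReal_mul_phase_sub (a : Matrix m n ℝ) (z : Matrix m n ℂ) :
    ∑ i, ∑ j, ‖(a i j : ℂ) * phase (z i j) - z i j‖ ^ 2 = ∑ i, ∑ j, (a i j - ‖z i j‖) ^ 2 := by
  simp only [norm_ofReal_mul_phase_sub, sq_abs]

theorem sqrt_sum_sq_norm_sub_norm_le (y z : Matrix m n ℂ) :
    √(∑ i, ∑ j, (‖y i j‖ - ‖z i j‖) ^ 2) ≤ √(∑ i, ∑ j, ‖y i j - z i j‖ ^ 2) := by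
  gcongr √(∑ i, ∑ j, ?_) with i _ j _
  rw [sq_le_sq, abs_norm]
  exact abs_norm_sub_norm_le _ _

end Frobenius

theorem isLeast_setOf_exists_eq {α : Type*} {s : Set α} {f : α → ℝ} {a : α} (ha : a ∈ s)
    (hmin : ∀ x ∈ s, f a ≤ f x) : IsLeast {d | ∃ x ∈ s, d = f x} (f a) :=
  ⟨⟨a, ha, rfl⟩, by rintro _ ⟨x, hx, rfl⟩; exact hmin x hx⟩

theorem projection_onto_magnitude_constrained_set_general
    {N M : ℕ} (z : Matrix (Fin N) (Fin M) ℂ)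
    (C : Set (Matrix (Fin N) (Fin M) ℝ))
    (hCpos : ∀ m ∈ C, ∀ i j, 0 ≤ m i j)
    (mstar : Matrix (Fin N) (Fin M) ℝ) (hmem : mstar ∈ C)
    (hmin : ∀ m ∈ C,
      Real.sqrt (∑ i, ∑ j, (mstar i j - ‖z i j‖) ^ 2) ≤
        Real.sqrt (∑ i, ∑ j, (m i j - ‖z i j‖) ^ 2)) :
    let phase : Matrix (Fin N) (Fin M) ℂ := fun i j =>
      if z i j = 0 then 1 else z i j / (‖z i j‖ : ℂ)
    let E : Set (Matrix (Fin N) (Fin M) ℂ) :=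
      {y | (fun i j => ‖y i j‖) ∈ C}
    let ystar : Matrix (Fin N) (Fin M) ℂ := fun i j => (mstar i j : ℂ) * phase i j
    ystar ∈ E ∧
    (∀ y ∈ E,
      Real.sqrt (∑ i, ∑ j, ‖ystar i j - z i j‖ ^ 2) ≤
        Real.sqrt (∑ i, ∑ j, ‖y i j - z i j‖ ^ 2)) ∧
    sInf {d : ℝ | ∃ y ∈ E, d = Real.sqrt (∑ i, ∑ j, ‖y i j - z i j‖ ^ 2)} =
      sInf {d : ℝ | ∃ m ∈ C, d = Real.sqrt (∑ i, ∑ j, (m i j - ‖z i j‖) ^ 2)} := by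
  intro _ E ystar
  have hdist : √(∑ i, ∑ j, ‖ystar i j - z i j‖ ^ 2) = √(∑ i, ∑ j, (mstar i j - ‖z i j‖) ^ 2) := by
    rw [← sum_sq_norm_ofReal_mul_phase_sub]; rfl
  have hmemE : ystar ∈ E := by
    have : (fun i j => ‖ystar i j‖) = mstar :=
      funext₂ fun i j => Complex.norm_ofReal_mul_phase (hCpos mstar hmem i j) _
    exact (this ▸ hmem : (fun i j => ‖ystar i j‖) ∈ C)
  have hminE : ∀ y ∈ E, √(∑ i, ∑ j, ‖ystar i j - z i j‖ ^ 2) ≤ √(∑ i, ∑ j, ‖y i j - z i j‖ ^ 2) :=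
    fun y hy => hdist ▸ (hmin _ hy).trans (sqrt_sum_sq_norm_sub_norm_le y z)
  refine ⟨hmemE, hminE, ?_⟩
  rw [(isLeast_setOf_exists_eq hmemE hminE).csInf_eq, (isLeast_setOf_exists_eq hmem hmin).csInf_eq,
    hdist]

/-- Projection onto a set of complex matrices constrained through
their entrywise magnitudes. Let `C` be a nonempty set of entrywise-nonnegative
real `N×M` matrices and `E = {y : |y| ∈ C}`. If `m⋆ ∈ C` minimizes `‖m - |z|‖_F`
over `C`, then `y⋆` with entries `m⋆_{ij}·(e^{i∠z})_{ij}` belongs to `E` and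
minimizes `‖y - z‖_F` over `E`; moreover the two infima coincide. -/
theorem projection_onto_magnitude_constrained_set
    {N M : ℕ} (z : Matrix (Fin N) (Fin M) ℂ)
    (C : Set (Matrix (Fin N) (Fin M) ℝ)) (hC : C.Nonempty)
    (hCpos : ∀ m ∈ C, ∀ i j, 0 ≤ m i j)
    (mstar : Matrix (Fin N) (Fin M) ℝ) (hmem : mstar ∈ C)
    (hmin : ∀ m ∈ C,
      Real.sqrt (∑ i, ∑ j, (mstar i j - ‖z i j‖) ^ 2) ≤
        Real.sqrt (∑ i, ∑ j, (m i j - ‖z i j‖) ^ 2)) :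
    let phase : Matrix (Fin N) (Fin M) ℂ := fun i j =>
      if z i j = 0 then 1 else z i j / (‖z i j‖ : ℂ)
    let E : Set (Matrix (Fin N) (Fin M) ℂ) :=
      {y | (fun i j => ‖y i j‖) ∈ C}
    let ystar : Matrix (Fin N) (Fin M) ℂ := fun i j => (mstar i j : ℂ) * phase i j
    ystar ∈ E ∧
    (∀ y ∈ E,
      Real.sqrt (∑ i, ∑ j, ‖ystar i j - z i j‖ ^ 2) ≤
        Real.sqrt (∑ i, ∑ j, ‖y i j - z i j‖ ^ 2)) ∧
    sInf {d : ℝ | ∃ y ∈ E, d = Real.sqrt (∑ i, ∑ j, ‖y i j - z i j‖ ^ 2)} =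
      sInf {d : ℝ | ∃ m ∈ C, d = Real.sqrt (∑ i, ∑ j, (m i j - ‖z i j‖) ^ 2)} :=
  projection_onto_magnitude_constrained_set_general z C hCpos mstar hmem hmin
end

section
/- Let H and K be Euclidean spaces, G : H → ℝ a convex function, L : H → K a linear map with adjoint L*, and let τ > 0, b ∈ K, s₀ ∈ H. Then the unique minimizer over s ∈ H of the preconditioned objective G(s) + (1/2)‖L s − b‖² + (1/2)⟨((1/τ)·Id − L*∘L)(s − s₀), s − s₀⟩ equals prox_{τG}( s₀ − τ L*(L s₀ − b) ), where prox_{τG}(c) is the unique minimizer over s ∈ H of τ G(s) + (1/2)‖s − c‖². -/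
/-!
Expanding the squares, the preconditioned objective is `τ⁻¹` times the proximal objective
`s ↦ τ G(s) + ½‖s - (s₀ - τ L*(L s₀ - b))‖²` plus a constant: the `-½‖L(s - s₀)‖²` of the
preconditioner cancels the quadratic part of `½‖L s - b‖²`, and the cross term `⟪L(s - s₀), L s₀ - b⟫`
is absorbed by moving the centre from `s₀` to `s₀ - τ L*(L s₀ - b)`. A positive affine
rescaling preserves (unique) minimizers.
-/

open LinearMap

section Affine

variable {α : Type*} {f g : α → ℝ} {c d : ℝ} {p : α}

theorem le_of_eq_mul_add_of_le (hc : 0 < c) (hfg : ∀ s, f s = c * g s + d)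
    (hp : ∀ s, g p ≤ g s) (s : α) : f p ≤ f s := by
  rw [hfg, hfg]
  gcongr
  exact hp s

theorem eq_of_eq_mul_add_of_eq (hc : c ≠ 0) (hfg : ∀ s, f s = c * g s + d)
    (hpu : ∀ s, g s = g p → s = p) (s : α) (hs : f s = f p) : s = p := by
  rw [hfg, hfg, add_left_inj, mul_right_inj' hc] at hs
  exact hpu s hs

end Affine

section CompleteSquare

variable {H K : Type*} [NormedAddCommGroup H] [InnerProductSpace ℝ H] [FiniteDimensional ℝ H]
  [NormedAddCommGroup K] [InnerProductSpace ℝ K] [FiniteDimensional ℝ K]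

theorem inner_smul_sub_adjoint_comp_self (L : H →ₗ[ℝ] K) (a : ℝ) (h : H) :
    inner ℝ (a • h - adjoint L (L h)) h = a * ‖h‖ ^ 2 - ‖L h‖ ^ 2 := by
  rw [inner_sub_left, real_inner_smul_left, adjoint_inner_left, real_inner_self_eq_norm_sq,
    real_inner_self_eq_norm_sq]

theorem norm_sub_sq_add_inner_preconditioner (L : H →ₗ[ℝ] K) {τ : ℝ} (hτ : τ ≠ 0)
    (b : K) (s₀ s : H) :
    ‖L s - b‖ ^ 2 + inner ℝ ((1 / τ) • (s - s₀) - adjoint L (L (s - s₀))) (s - s₀) =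
      (1 / τ) * ‖s - (s₀ - τ • adjoint L (L s₀ - b))‖ ^ 2 +
        (‖L s₀ - b‖ ^ 2 - τ * ‖adjoint L (L s₀ - b)‖ ^ 2) := by
  have hLs : L s - b = L (s - s₀) + (L s₀ - b) := by rw [map_sub, sub_add_sub_cancel]
  have hs : s - (s₀ - τ • adjoint L (L s₀ - b)) = (s - s₀) + τ • adjoint L (L s₀ - b) := by
    rw [sub_sub_eq_add_sub, add_sub_right_comm]
  rw [inner_smul_sub_adjoint_comp_self, hLs, hs, norm_add_sq_real, norm_add_sq_real,
    real_inner_smul_right, adjoint_inner_right, norm_smul, mul_pow, Real.norm_eq_abs, sq_abs]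
  field_simp
  ring

end CompleteSquare

theorem preconditioned_update_is_prox_general
    {H K : Type*} [NormedAddCommGroup H] [InnerProductSpace ℝ H] [FiniteDimensional ℝ H]
    [NormedAddCommGroup K] [InnerProductSpace ℝ K] [FiniteDimensional ℝ K]
    (G : H → ℝ)
    (L : H →ₗ[ℝ] K) (τ : ℝ) (hτ : 0 < τ) (b : K) (s₀ : H) (p : H)
    (hp : ∀ s : H,
      τ * G p + (1 / 2) * ‖p - (s₀ - τ • (LinearMap.adjoint L) (L s₀ - b))‖ ^ 2 ≤
        τ * G s + (1 / 2) * ‖s - (s₀ - τ • (LinearMap.adjoint L) (L s₀ - b))‖ ^ 2)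
    (hpu : ∀ s : H,
      τ * G s + (1 / 2) * ‖s - (s₀ - τ • (LinearMap.adjoint L) (L s₀ - b))‖ ^ 2 =
          τ * G p + (1 / 2) * ‖p - (s₀ - τ • (LinearMap.adjoint L) (L s₀ - b))‖ ^ 2 →
        s = p) :
    let F : H → ℝ := fun s =>
      G s + (1 / 2) * ‖L s - b‖ ^ 2 +
        (1 / 2) *
          (inner ℝ ((1 / τ) • (s - s₀) - (LinearMap.adjoint L) (L (s - s₀))) (s - s₀) : ℝ)
    (∀ s : H, F p ≤ F s) ∧ (∀ s : H, F s = F p → s = p) := by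
  intro F
  have hF : ∀ s, F s = (1 / τ) *
      (τ * G s + (1 / 2) * ‖s - (s₀ - τ • adjoint L (L s₀ - b))‖ ^ 2) +
      (1 / 2) * (‖L s₀ - b‖ ^ 2 - τ * ‖adjoint L (L s₀ - b)‖ ^ 2) := fun s => by
    have h := norm_sub_sq_add_inner_preconditioner L hτ.ne' b s₀ s
    have hττ : 1 / τ * τ = 1 := one_div_mul_cancel hτ.ne'
    simp only [F]
    linear_combination (1 / 2) * h - G s * hττ
  exact ⟨le_of_eq_mul_add_of_le (by positivity) hF hp,
    eq_of_eq_mul_add_of_eq (by positivity) hF hpu⟩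

/-- Chambolle–Pock preconditioning. For convex `G : H → ℝ`, linear
`L : H → K`, `τ > 0`, `b ∈ K`, `s₀ ∈ H`, the unique minimizer of the
preconditioned objective
`s ↦ G(s) + (1/2)‖L s - b‖² + (1/2)⟨((1/τ)·Id - L*∘L)(s - s₀), s - s₀⟩`
equals `prox_{τG}(s₀ - τ L*(L s₀ - b))`. Here `p = prox_{τG}(c)` is encoded as
the hypothesis that `p` is the (unique) minimizer of `s ↦ τ G(s) + (1/2)‖s - c‖²`
with `c = s₀ - τ L*(L s₀ - b)`, and the conclusion says `p` is the unique
minimizer of the preconditioned objective. -/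
theorem preconditioned_update_is_prox
    {H K : Type*} [NormedAddCommGroup H] [InnerProductSpace ℝ H] [FiniteDimensional ℝ H]
    [NormedAddCommGroup K] [InnerProductSpace ℝ K] [FiniteDimensional ℝ K]
    (G : H → ℝ) (hG : ConvexOn ℝ Set.univ G)
    (L : H →ₗ[ℝ] K) (τ : ℝ) (hτ : 0 < τ) (b : K) (s₀ : H) (p : H)
    (hp : ∀ s : H,
      τ * G p + (1 / 2) * ‖p - (s₀ - τ • (LinearMap.adjoint L) (L s₀ - b))‖ ^ 2 ≤
        τ * G s + (1 / 2) * ‖s - (s₀ - τ • (LinearMap.adjoint L) (L s₀ - b))‖ ^ 2)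
    (hpu : ∀ s : H,
      τ * G s + (1 / 2) * ‖s - (s₀ - τ • (LinearMap.adjoint L) (L s₀ - b))‖ ^ 2 =
          τ * G p + (1 / 2) * ‖p - (s₀ - τ • (LinearMap.adjoint L) (L s₀ - b))‖ ^ 2 →
        s = p) :
    let F : H → ℝ := fun s =>
      G s + (1 / 2) * ‖L s - b‖ ^ 2 +
        (1 / 2) *
          (inner ℝ ((1 / τ) • (s - s₀) - (LinearMap.adjoint L) (L (s - s₀))) (s - s₀) : ℝ)
    (∀ s : H, F p ≤ F s) ∧ (∀ s : H, F s = F p → s = p) :=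
  preconditioned_update_is_prox_general G L τ hτ b s₀ p hp hpu
end
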